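/- Let D and E be real M×N matrices with M ≥ 1, let the columns of D be linearly independent (v ↦ D·v injective), set D⁺ = (DᵀD)⁻¹·Dᵀ, and let F ∈ ℝ^M. If u_h ∈ ℝ^N minimizes v ↦ ‖D·v − F‖₂, then for every û ∈ ℝ^N: ‖E·u_h − E·û‖_{ℓ2} ≤ (1/√M)·‖E‖₂·‖D⁺‖₂·‖F − D·û‖₂, where ‖E‖₂ and ‖D⁺‖₂ are the operator norms induced by the Euclidean vector norms. -/

import Mathlib

open Matrix Finset

/-- The operator (spectral) norm of a real rectangular matrix, induced by the
Euclidean vector norms: `‖A‖₂ = sup_{x ≠ 0} ‖A·x‖₂ / ‖x‖₂`. -/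
noncomputable def matSpectralNorm {M N : ℕ} (A : Matrix (Fin M) (Fin N) ℝ) : ℝ :=
  ‖(Matrix.toEuclideanLin A).toContinuousLinearMap‖

/-! The residual `D u_h - F` of a least-squares solution is orthogonal to the range of `D`, so by
Pythagoras `‖D (u_h - û)‖₂ ≤ ‖F - D û‖₂`. Injectivity of `D` makes `DᵀD` positive definite, hence
`D⁺ D = 1` and `E (u_h - û) = (E D⁺) (D (u_h - û))`; submultiplicativity of the operator norm
finishes the estimate. -/

open WithLp (toLp ofLp)
open scoped Matrix.Norms.L2Operator

theorem Submodule.norm_sub_le_norm_sub_of_forall_norm_sub_le {V : Type*} [NormedAddCommGroup V]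
    [InnerProductSpace ℝ V] (K : Submodule ℝ V) {f p q : V} (hp : p ∈ K) (hq : q ∈ K)
    (hmin : ∀ w ∈ K, ‖p - f‖ ≤ ‖w - f‖) : ‖p - q‖ ≤ ‖f - q‖ := by
  have hbdd : BddBelow (Set.range fun w : (K : Set V) => ‖f - w‖) :=
    bddBelow_def.2 ⟨0, Set.forall_mem_range.2 fun _ => norm_nonneg _⟩
  have hinf : ‖f - p‖ = ⨅ w : (K : Set V), ‖f - w‖ :=
    le_antisymm (le_ciInf fun w => by simpa only [norm_sub_rev f] using hmin w w.2)
      (ciInf_le hbdd (⟨p, hp⟩ : (K : Set V)))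
  have horth := (K.norm_eq_iInf_iff_real_inner_eq_zero hp).1 hinf (p - q) (K.sub_mem hp hq)
  have hpyth := norm_add_sq_eq_norm_sq_add_norm_sq_real horth
  rw [sub_add_sub_cancel] at hpyth
  exact (sq_le_sq₀ (norm_nonneg _) (norm_nonneg _)).1 (by linarith [sq_nonneg ‖f - p‖])

theorem Matrix.norm_mulVec_sub_le_of_forall_norm_mulVec_sub_le {m n : Type*} [Fintype m]
    [Fintype n] [DecidableEq n] (D : Matrix m n ℝ) {F : m → ℝ} {uh : n → ℝ}
    (hmin : ∀ v, ‖toLp 2 (D *ᵥ uh - F)‖ ≤ ‖toLp 2 (D *ᵥ v - F)‖) (u : n → ℝ) :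
    ‖toLp 2 (D *ᵥ (uh - u))‖ ≤ ‖toLp 2 (F - D *ᵥ u)‖ := by
  have hrange (v : n → ℝ) : toLp 2 (D *ᵥ v) ∈ LinearMap.range (toEuclideanLin D) :=
    LinearMap.mem_range_self (toEuclideanLin D) (toLp 2 v)
  simpa only [mulVec_sub, WithLp.toLp_sub] using
    (LinearMap.range (toEuclideanLin D)).norm_sub_le_norm_sub_of_forall_norm_sub_le
      (f := toLp 2 F) (hrange uh) (hrange u)
      (by rintro _ ⟨v, rfl⟩; simpa only [toLpLin_apply, WithLp.toLp_sub] using hmin (ofLp v))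

theorem Matrix.transpose_mul_self_inv_mul_transpose_mul_self {m n : Type*} [Fintype m]
    [Fintype n] [DecidableEq n] {D : Matrix m n ℝ} (hD : Function.Injective D.mulVec) :
    (Dᵀ * D)⁻¹ * Dᵀ * D = 1 := by
  have hDD : IsUnit (Dᵀ * D) := (PosDef.conjTranspose_mul_self D hD).isUnit
  rw [Matrix.mul_assoc, nonsing_inv_mul _ ((isUnit_iff_isUnit_det _).1 hDD)]

theorem sqrt_sum_sq_eq_norm_toLp {ι : Type*} [Fintype ι] (x : ι → ℝ) :
    √(∑ i, x i ^ 2) = ‖toLp 2 x‖ := by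
  simp [EuclideanSpace.norm_eq]

theorem matSpectralNorm_eq_l2_opNorm {M N : ℕ} (A : Matrix (Fin M) (Fin N) ℝ) :
    matSpectralNorm A = ‖A‖ :=
  rfl

theorem lsq_stability_estimate_general
    (M N : ℕ) (D E : Matrix (Fin M) (Fin N) ℝ)
    (F : Fin M → ℝ) (uh : Fin N → ℝ)
    (hinj : Function.Injective D.mulVec)
    (hmin : ∀ v : Fin N → ℝ,
      Real.sqrt (∑ i, (D.mulVec uh - F) i ^ 2) ≤
        Real.sqrt (∑ i, (D.mulVec v - F) i ^ 2)) :
    ∀ uhat : Fin N → ℝ,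
      (1 / Real.sqrt M) * Real.sqrt (∑ i, (E.mulVec uh - E.mulVec uhat) i ^ 2) ≤
        (1 / Real.sqrt M) * matSpectralNorm E * matSpectralNorm ((Dᵀ * D)⁻¹ * Dᵀ) *
          Real.sqrt (∑ i, (F - D.mulVec uhat) i ^ 2) := by
  intro uhat
  simp only [sqrt_sum_sq_eq_norm_toLp, matSpectralNorm_eq_l2_opNorm] at hmin ⊢
  have hresidual := D.norm_mulVec_sub_le_of_forall_norm_mulVec_sub_le hmin uhat
  calc 1 / √M * ‖toLp 2 (E *ᵥ uh - E *ᵥ uhat)‖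
      = 1 / √M * ‖toLp 2 ((E * ((Dᵀ * D)⁻¹ * Dᵀ)) *ᵥ (D *ᵥ (uh - uhat)))‖ := by
        rw [mulVec_mulVec, Matrix.mul_assoc, transpose_mul_self_inv_mul_transpose_mul_self hinj,
          Matrix.mul_one, mulVec_sub]
    _ ≤ 1 / √M * (‖E * ((Dᵀ * D)⁻¹ * Dᵀ)‖ * ‖toLp 2 (D *ᵥ (uh - uhat))‖) := by
        gcongr
        exact l2_opNorm_mulVec (E * ((Dᵀ * D)⁻¹ * Dᵀ)) (toLp 2 (D *ᵥ (uh - uhat)))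
    _ ≤ 1 / √M * (‖E‖ * ‖(Dᵀ * D)⁻¹ * Dᵀ‖ * ‖toLp 2 (F - D *ᵥ uhat)‖) := by
        gcongr
        exact l2_opNorm_mul _ _
    _ = 1 / √M * ‖E‖ * ‖(Dᵀ * D)⁻¹ * Dᵀ‖ * ‖toLp 2 (F - D *ᵥ uhat)‖ := by ring

/-- **Stability estimate for the least-squares PDE solution.**
If the columns of `D` are independent and `u_h` minimizes `v ↦ ‖D·v − F‖₂`, then
for every `û`:
`‖E·u_h − E·û‖_{ℓ2} ≤ (1/√M)·‖E‖₂·‖D⁺‖₂·‖F − D·û‖₂`,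
where `‖e‖_{ℓ2} = (1/√M)‖e‖₂` and `‖·‖₂` on matrices is the operator norm
induced by the Euclidean vector norms. -/
theorem lsq_stability_estimate
    (M N : ℕ) (hM : 1 ≤ M) (D E : Matrix (Fin M) (Fin N) ℝ)
    (F : Fin M → ℝ) (uh : Fin N → ℝ)
    (hinj : Function.Injective D.mulVec)
    (hmin : ∀ v : Fin N → ℝ,
      Real.sqrt (∑ i, (D.mulVec uh - F) i ^ 2) ≤
        Real.sqrt (∑ i, (D.mulVec v - F) i ^ 2)) :
    ∀ uhat : Fin N → ℝ,
      (1 / Real.sqrt M) * Real.sqrt (∑ i, (E.mulVec uh - E.mulVec uhat) i ^ 2) ≤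
        (1 / Real.sqrt M) * matSpectralNorm E * matSpectralNorm ((Dᵀ * D)⁻¹ * Dᵀ) *
          Real.sqrt (∑ i, (F - D.mulVec uhat) i ^ 2) :=
  lsq_stability_estimate_general M N D E F uh hinj hmin
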